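/- For every n ≥ 6, (2n−1)·X_{n−1} < X_n < 2n·X_{n−1}. -/
import Mathlib

/-- The sequence `X_n` counting equivalence classes of circular planar electrical networks:
`X_1 = 1` and, for `n ≥ 2`,
`X_n = 2(n-1) X_{n-1} + ∑_{j=2}^{n-2} (j-1) X_j X_{n-j}` (the sum being empty for `n ≤ 3`;
here it is written over the attached index set to establish termination). -/
def X : ℕ → ℕ
  | 0 => 1
  | 1 => 1
  | n + 2 =>
      2 * (n + 1) * X (n + 1) +
        ∑ j ∈ (Finset.Icc 2 n).attach, (j.1 - 1) * X j.1 * X (n + 2 - j.1)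
decreasing_by
  · exact Nat.lt_succ_self (n + 1)
  · have := j.2; rw [Finset.mem_Icc] at this; omega
  · have := j.2; rw [Finset.mem_Icc] at this; omega

def S (n : ℕ) : ℕ := ∑ j ∈ Finset.Icc 2 n, (j - 1) * X j * X (n + 2 - j)

lemma X_succ (n : ℕ) : X (n + 2) = 2 * (n + 1) * X (n + 1) + S n := by
  rw [X, S, Finset.sum_attach (Finset.Icc 2 n) (fun j => (j - 1) * X j * X (n + 2 - j))]

lemma X1 : X 1 = 1 := by rw [X]
lemma S0 : S 0 = 0 := by rw [S]; rw [show Finset.Icc 2 0 = ∅ by decide]; rfl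
lemma S1 : S 1 = 0 := by rw [S]; rw [show Finset.Icc 2 1 = ∅ by decide]; rfl
lemma X2 : X 2 = 2 := by rw [X_succ, S0, X1]
lemma X3 : X 3 = 8 := by rw [X_succ, S1, X2]
lemma S2 : S 2 = 4 := by
  rw [S, show Finset.Icc 2 2 = {2} by decide, Finset.sum_singleton, X2]
lemma X4 : X 4 = 52 := by rw [X_succ, S2, X3]
lemma S3 : S 3 = 48 := by
  rw [S, show Finset.Icc 2 3 = {2,3} by decide]
  rw [Finset.sum_insert (by decide), Finset.sum_singleton, X2, X3]
lemma X5 : X 5 = 464 := by rw [X_succ, S3, X4]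
lemma S4 : S 4 = 544 := by
  rw [S, show Finset.Icc 2 4 = {2,3,4} by decide]
  rw [Finset.sum_insert (by decide), Finset.sum_insert (by decide), Finset.sum_singleton,
    X2, X3, X4]
  norm_num
lemma X6 : X 6 = 5184 := by rw [X_succ, S4, X5]

lemma X_ge (n : ℕ) : 2 * (n + 1) * X (n + 1) ≤ X (n + 2) := by
  rw [X_succ]; exact Nat.le_add_right _ _

lemma X_pos : ∀ n, 0 < X n
  | 0 => by rw [X]; norm_num
  | 1 => by rw [X]; norm_num
  | n + 2 => by
      have h1 := X_pos (n + 1)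
      have h := X_ge n
      have : 0 < 2 * (n + 1) * X (n + 1) := by positivity
      omega

/-- Key lemma: `X j * X k ≤ 8 * X (j + k - 3)` for `j, k ≥ 3`, given the
upper ratio bound up to `j`. -/
lemma key_of : ∀ j k : ℕ, 3 ≤ j → 3 ≤ k → j ≤ k →
    (∀ m, 2 ≤ m → m ≤ j → X m ≤ 2 * m * X (m - 1)) →
    X j * X k ≤ 8 * X (j + k - 3) := by
  intro j
  induction j using Nat.strong_induction_on with
  | _ j ih =>
    intro k h3j h3k hjk G
    rcases Nat.lt_or_ge j 5 with h5 | h5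
    · interval_cases j
      · -- j = 3
        rw [X3, show 3 + k - 3 = k by omega]
      · -- j = 4
        rw [X4, show 4 + k - 3 = (k - 2) + 3 by omega]
        obtain ⟨m, rfl⟩ : ∃ m, k = m + 2 := ⟨k - 2, by omega⟩
        rw [show m + 2 - 2 + 3 = (m + 1) + 2 by omega]
        have h1 : 2 * (m + 2) * X (m + 2) ≤ X (m + 3) := X_ge (m + 1)
        calc 52 * X (m + 2) ≤ 8 * (2 * (m + 2) * X (m + 2)) := by
              have : 52 ≤ 8 * (2 * (m + 2)) := by omega
              calc 52 * X (m + 2) ≤ 8 * (2 * (m + 2)) * X (m + 2) :=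
                    Nat.mul_le_mul_right _ this
                _ = 8 * (2 * (m + 2) * X (m + 2)) := by ring
          _ ≤ 8 * X (m + 3) := Nat.mul_le_mul_left _ h1
    · -- j ≥ 5
      obtain ⟨m, rfl⟩ : ∃ m, k = m + 2 := ⟨k - 2, by omega⟩
      have h1 : X j ≤ 2 * j * X (j - 1) := G j (by omega) le_rfl
      have h2 : X (j - 1) ≤ 2 * (j - 1) * X (j - 2) := G (j - 1) (by omega) (by omega)
      have h3 : 2 * (m + 3) * X (m + 3) ≤ X (m + 4) := X_ge (m + 2)
      have h4 : 2 * (m + 2) * X (m + 2) ≤ X (m + 3) := X_ge (m + 1)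
      have hIH : X (j - 2) * X (m + 4) ≤ 8 * X (j + (m + 2) - 3) := by
        have := ih (j - 2) (by omega) (m + 4) (by omega) (by omega) (by omega)
          (fun m' hm' hm'2 => G m' hm' (by omega))
        rwa [show j - 2 + (m + 4) - 3 = j + (m + 2) - 3 by omega] at this
      have c1 : X j * X (m + 2) ≤ 4 * (j * (j - 1)) * (X (j - 2) * X (m + 2)) := by
        calc X j * X (m + 2) ≤ 2 * j * X (j - 1) * X (m + 2) := Nat.mul_le_mul_right _ h1
          _ ≤ 2 * j * (2 * (j - 1) * X (j - 2)) * X (m + 2) :=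
              Nat.mul_le_mul_right _ (Nat.mul_le_mul_left _ h2)
          _ = 4 * (j * (j - 1)) * (X (j - 2) * X (m + 2)) := by ring
      have c2 : 4 * (j * (j - 1)) * (X (j - 2) * X (m + 2)) ≤
          4 * ((m + 2) * (m + 3)) * (X (j - 2) * X (m + 2)) := by
        apply Nat.mul_le_mul_right
        apply Nat.mul_le_mul_left
        exact Nat.mul_le_mul hjk (by omega)
      have c3 : 4 * ((m + 2) * (m + 3)) * (X (j - 2) * X (m + 2)) ≤ X (j - 2) * X (m + 4) := by
        have : 4 * ((m + 2) * (m + 3)) * X (m + 2) ≤ X (m + 4) := by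
          calc 4 * ((m + 2) * (m + 3)) * X (m + 2)
              = 2 * (m + 3) * (2 * (m + 2) * X (m + 2)) := by ring
            _ ≤ 2 * (m + 3) * X (m + 3) := Nat.mul_le_mul_left _ h4
            _ ≤ X (m + 4) := h3
        calc 4 * ((m + 2) * (m + 3)) * (X (j - 2) * X (m + 2))
            = X (j - 2) * (4 * ((m + 2) * (m + 3)) * X (m + 2)) := by ring
          _ ≤ X (j - 2) * X (m + 4) := Nat.mul_le_mul_left _ this
      exact le_trans c1 (le_trans c2 (le_trans c3 hIH))

/-- Splitting off the first and last terms of `S (q+4)`. -/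
lemma S_split (q : ℕ) :
    S (q + 4) = 2 * (q + 4) * X (q + 4) +
      ∑ j ∈ Finset.Icc 3 (q + 3), (j - 1) * X j * X (q + 6 - j) := by
  have htop : S (q + 4) = (∑ j ∈ Finset.Icc 2 (q + 3), (j - 1) * X j * X (q + 6 - j))
      + (q + 4 - 1) * X (q + 4) * X (q + 6 - (q + 4)) := by
    rw [S, show q + 4 + 2 = q + 6 by omega]
    exact Finset.sum_Icc_succ_top (by omega) _
  have hins : Finset.Icc 2 (q + 3) = insert 2 (Finset.Icc 3 (q + 3)) := by
    ext x
    simp only [Finset.mem_Icc, Finset.mem_insert]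
    omega
  have hbot : (∑ j ∈ Finset.Icc 2 (q + 3), (j - 1) * X j * X (q + 6 - j))
      = (2 - 1) * X 2 * X (q + 6 - 2) + ∑ j ∈ Finset.Icc 3 (q + 3), (j - 1) * X j * X (q + 6 - j) := by
    rw [hins, Finset.sum_insert (by simp)]
  rw [htop, hbot, X2, show q + 6 - 2 = q + 4 by omega, show q + 6 - (q + 4) = 2 by omega,
    show q + 4 - 1 = q + 3 by omega, X2]
  ring

lemma gauss : ∀ q : ℕ, 8 * (∑ j ∈ Finset.Icc 3 (q + 3), (j - 1)) + 8 * (q + 4)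
    = 4 * (q + 4) * (q + 3)
  | 0 => by decide
  | q + 1 => by
      have h := gauss q
      rw [show q + 1 + 3 = (q + 3) + 1 by omega, Finset.sum_Icc_succ_top (by omega)]
      ring_nf
      ring_nf at h
      omega

/-- The middle part of the sum is small. -/
lemma M_le (q : ℕ) (G : ∀ m, 2 ≤ m → m ≤ q + 3 → X m ≤ 2 * m * X (m - 1)) :
    (∑ j ∈ Finset.Icc 3 (q + 3), (j - 1) * X j * X (q + 6 - j)) ≤ 2 * (q + 4) * X (q + 4) := by
  have hterm : ∀ j ∈ Finset.Icc 3 (q + 3), (j - 1) * X j * X (q + 6 - j) ≤ (j - 1) * (8 * X (q + 3)) := by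
    intro j hj
    rw [Finset.mem_Icc] at hj
    have hk3 : 3 ≤ q + 6 - j := by omega
    have hXX : X j * X (q + 6 - j) ≤ 8 * X (q + 3) := by
      rcases le_or_gt j (q + 6 - j) with h | h
      · have := key_of j (q + 6 - j) (by omega) hk3 h (fun m hm hm2 => G m hm (by omega))
        rwa [show j + (q + 6 - j) - 3 = q + 3 by omega] at this
      · have := key_of (q + 6 - j) j hk3 (by omega) (by omega)
          (fun m hm hm2 => G m hm (by omega))
        rw [show q + 6 - j + j - 3 = q + 3 by omega] at this
        rwa [Nat.mul_comm] at this
    calc (j - 1) * X j * X (q + 6 - j) = (j - 1) * (X j * X (q + 6 - j)) := by ring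
      _ ≤ (j - 1) * (8 * X (q + 3)) := Nat.mul_le_mul_left _ hXX
  have h1 : (∑ j ∈ Finset.Icc 3 (q + 3), (j - 1) * X j * X (q + 6 - j)) ≤
      (∑ j ∈ Finset.Icc 3 (q + 3), (j - 1)) * (8 * X (q + 3)) := by
    exact le_trans (Finset.sum_le_sum hterm) (le_of_eq (Finset.sum_mul _ _ _).symm)
  have h2 : (∑ j ∈ Finset.Icc 3 (q + 3), (j - 1)) * (8 * X (q + 3)) ≤
      4 * (q + 4) * (q + 3) * X (q + 3) := by
    have := gauss q
    calc (∑ j ∈ Finset.Icc 3 (q + 3), (j - 1)) * (8 * X (q + 3))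
        = (8 * (∑ j ∈ Finset.Icc 3 (q + 3), (j - 1))) * X (q + 3) := by ring
      _ ≤ (4 * (q + 4) * (q + 3)) * X (q + 3) := Nat.mul_le_mul_right _ (by omega)
  have h3 : 4 * (q + 4) * (q + 3) * X (q + 3) ≤ 2 * (q + 4) * X (q + 4) := by
    have := X_ge (q + 2)
    calc 4 * (q + 4) * (q + 3) * X (q + 3)
        = 2 * (q + 4) * (2 * (q + 3) * X (q + 3)) := by ring
      _ ≤ 2 * (q + 4) * X (q + 4) := Nat.mul_le_mul_left _ this
  exact le_trans h1 (le_trans h2 h3)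

/-- Global upper ratio bound. -/
lemma G2 : ∀ m, 2 ≤ m → X m ≤ 2 * m * X (m - 1) := by
  intro m
  induction m using Nat.strong_induction_on with
  | _ m ih =>
    intro h2
    rcases Nat.lt_or_ge m 6 with h6 | h6
    · interval_cases m
      · rw [X2, X1]; norm_num
      · rw [X3, X2]; norm_num
      · rw [X4, X3]; norm_num
      · rw [X5, X4]; norm_num
    · obtain ⟨q, rfl⟩ : ∃ q, m = q + 6 := ⟨m - 6, by omega⟩
      have hS : S (q + 4) ≤ 4 * (q + 4) * X (q + 4) := by
        rw [S_split]
        have hM := M_le q (fun m' hm' hm'2 => ih m' (by omega) hm')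
        calc 2 * (q + 4) * X (q + 4) + ∑ j ∈ Finset.Icc 3 (q + 3), (j - 1) * X j * X (q + 6 - j)
            ≤ 2 * (q + 4) * X (q + 4) + 2 * (q + 4) * X (q + 4) := Nat.add_le_add_left hM _
          _ = 4 * (q + 4) * X (q + 4) := by ring
      have hX5 : 2 * (q + 4) * X (q + 4) ≤ X (q + 5) := X_ge (q + 3)
      rw [show q + 6 = (q + 4) + 2 by omega, X_succ, show q + 4 + 2 - 1 = q + 5 by omega]
      simp only [show q + 4 + 1 = q + 5 by omega]
      calc 2 * (q + 5) * X (q + 5) + S (q + 4)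
          ≤ 2 * (q + 5) * X (q + 5) + 4 * (q + 4) * X (q + 4) := Nat.add_le_add_left hS _
        _ = 2 * (q + 5) * X (q + 5) + 2 * (2 * (q + 4) * X (q + 4)) := by ring
        _ ≤ 2 * (q + 5) * X (q + 5) + 2 * X (q + 5) :=
            Nat.add_le_add_left (Nat.mul_le_mul_left 2 hX5) _
        _ = 2 * (q + 4 + 2) * X (q + 5) := by ring

/-- `S p ≤ 2 X (p+1)` for all `p`. -/
lemma S_le (p : ℕ) : S p ≤ 2 * X (p + 1) := by
  have h := G2 (p + 2) (by omega)
  rw [X_succ, show p + 2 - 1 = p + 1 by omega] at h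
  have : 2 * (p + 2) * X (p + 1) = 2 * (p + 1) * X (p + 1) + 2 * X (p + 1) := by ring
  omega

/-- Lower bound for the sum `S (q+5)`. -/
lemma S_ge (q : ℕ) : 2 * (q + 5) * X (q + 5) + 8 * (q + 5) * X (q + 4) ≤ S (q + 5) := by
  rw [show q + 5 = (q + 1) + 4 by omega, S_split, show q + 1 + 4 = q + 5 by omega,
    show q + 1 + 3 = q + 4 by omega, show q + 1 + 6 = q + 7 by omega]
  apply Nat.add_le_add_left
  have hsub : ({3, q + 4} : Finset ℕ) ⊆ Finset.Icc 3 (q + 4) := by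
    intro x hx
    simp only [Finset.mem_insert, Finset.mem_singleton] at hx
    rw [Finset.mem_Icc]
    omega
  have hpair : (∑ j ∈ ({3, q + 4} : Finset ℕ), (j - 1) * X j * X (q + 7 - j))
      = 8 * (q + 5) * X (q + 4) := by
    rw [Finset.sum_pair (by omega)]
    rw [show q + 7 - 3 = q + 4 by omega, show q + 7 - (q + 4) = 3 by omega, X3,
      show q + 4 - 1 = q + 3 by omega]
    ring
  calc 8 * (q + 5) * X (q + 4)
      = ∑ j ∈ ({3, q + 4} : Finset ℕ), (j - 1) * X j * X (q + 7 - j) := hpair.symm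
    _ ≤ ∑ j ∈ Finset.Icc 3 (q + 4), (j - 1) * X j * X (q + 7 - j) :=
        Finset.sum_le_sum_of_subset hsub

/-- For every `n ≥ 6`, `(2n-1)·X_{n-1} < X_n < 2n·X_{n-1}`. -/
theorem X_ratio_bounds (n : ℕ) (hn : 6 ≤ n) :
    (2 * n - 1) * X (n - 1) < X n ∧ X n < 2 * n * X (n - 1) := by
  rcases Nat.lt_or_ge n 7 with h7 | h7
  · have hn6 : n = 6 := by omega
    subst hn6
    rw [show (6 : ℕ) - 1 = 5 by omega, X5, X6]
    norm_num
  · obtain ⟨q, rfl⟩ : ∃ q, n = q + 7 := ⟨n - 7, by omega⟩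
    rw [show q + 7 - 1 = q + 6 by omega, show 2 * (q + 7) - 1 = 2 * q + 13 by omega]
    have hX7 : X (q + 7) = 2 * (q + 6) * X (q + 6) + S (q + 5) := X_succ (q + 5)
    have hX6 : X (q + 6) = 2 * (q + 5) * X (q + 5) + S (q + 4) := X_succ (q + 4)
    have hposX4 : 0 < X (q + 4) := X_pos _
    have hposX5 : 0 < X (q + 5) := X_pos _
    constructor
    · -- lower bound: S (q+5) > X (q+6)
      have h1 : S (q + 4) < 8 * (q + 5) * X (q + 4) := by
        have hle : S (q + 4) ≤ 2 * X (q + 5) := S_le (q + 4)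
        have hup : X (q + 5) ≤ 2 * (q + 5) * X (q + 4) := by
          have := G2 (q + 5) (by omega)
          rwa [show q + 5 - 1 = q + 4 by omega] at this
        calc S (q + 4) ≤ 2 * X (q + 5) := hle
          _ ≤ 2 * (2 * (q + 5) * X (q + 4)) := Nat.mul_le_mul_left 2 hup
          _ = 4 * (q + 5) * X (q + 4) := by ring
          _ < 8 * (q + 5) * X (q + 4) := by
              have : 0 < (q + 5) * X (q + 4) := by positivity
              nlinarith
      have h2 : X (q + 6) < S (q + 5) := by
        have := S_ge q
        omega
      calc (2 * q + 13) * X (q + 6) = 2 * (q + 6) * X (q + 6) + X (q + 6) := by ring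
        _ < 2 * (q + 6) * X (q + 6) + S (q + 5) := Nat.add_lt_add_left h2 _
        _ = X (q + 7) := hX7.symm
    · -- upper bound: S (q+5) < 2 * X (q+6)
      have hS5 : S (q + 5) ≤ 4 * (q + 5) * X (q + 5) := by
        rw [show q + 5 = (q + 1) + 4 by omega, S_split, show q + 1 + 4 = q + 5 by omega]
        have hM := M_le (q + 1) (fun m' hm' hm'2 => G2 m' hm')
        rw [show q + 1 + 4 = q + 5 by omega, show q + 1 + 3 = q + 4 by omega,
          show q + 1 + 6 = q + 7 by omega] at hM
        calc 2 * (q + 5) * X (q + 5) + ∑ j ∈ Finset.Icc 3 (q + 4), (j - 1) * X j * X (q + 7 - j)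
            ≤ 2 * (q + 5) * X (q + 5) + 2 * (q + 5) * X (q + 5) := Nat.add_le_add_left hM _
          _ = 4 * (q + 5) * X (q + 5) := by ring
      have hS4pos : 0 < S (q + 4) := by
        rw [S_split]
        have : 0 < 2 * (q + 4) * X (q + 4) := by positivity
        omega
      have h3 : S (q + 5) < 2 * X (q + 6) := by
        have e : 2 * X (q + 6) = 4 * (q + 5) * X (q + 5) + 2 * S (q + 4) := by
          rw [hX6]; ring
        omega
      calc X (q + 7) = 2 * (q + 6) * X (q + 6) + S (q + 5) := hX7
        _ < 2 * (q + 6) * X (q + 6) + 2 * X (q + 6) := Nat.add_lt_add_left h3 _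
        _ = 2 * (q + 7) * X (q + 6) := by ring
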